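/- Let q and z be points of the Euclidean plane ℝ² with q ≠ z, let d = dist(q, z), and let δ be a real number with 0 < δ < d. Then the set of angles θ ∈ [0, 2π) such that the ray {q + t·(cos θ, sin θ) : t ≥ 0} meets the closed ball of radius δ centered at z has one-dimensional Lebesgue measure exactly 2·arcsin(δ/d). -/

import Mathlib

/-!
Write `z - q = d • e(φ)` with `e = planeDir`. Expanding `‖t • e(θ) - (z - q)‖² ≤ δ²` as a
quadratic in `t ≥ 0`, the ray in direction `θ` meets the ball iff `⟪e(θ), z - q⟫ ≥ √(d² - δ²)`,
i.e. iff `cos (θ - φ) ≥ cos a` with `a = arcsin (δ / d)`. This condition is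
`2π`-periodic in `θ`, so its measure over `[0, 2π)` equals its measure over `(φ - π, φ + π]`,
where it cuts out the arc `[φ - a, φ + a]`.
-/

open MeasureTheory

noncomputable def planeDir (θ : ℝ) : EuclideanSpace ℝ (Fin 2) :=
  (WithLp.equiv 2 (Fin 2 → ℝ)).symm ![Real.cos θ, Real.sin θ]

open Real Set
open scoped RealInnerProductSpace

theorem exists_nonneg_norm_smul_sub_le_iff {E : Type*} [NormedAddCommGroup E]
    [InnerProductSpace ℝ E] {u v : E} (hu : ‖u‖ = 1) {δ : ℝ} (hδ : 0 ≤ δ)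
    (hδv : δ < ‖v‖) :
    (∃ t : ℝ, 0 ≤ t ∧ ‖t • u - v‖ ≤ δ) ↔ √(‖v‖ ^ 2 - δ ^ 2) ≤ ⟪u, v⟫ := by
  have norm_sq : ∀ t : ℝ, ‖t • u - v‖ ^ 2 = t ^ 2 - 2 * t * ⟪u, v⟫ + ‖v‖ ^ 2 := fun t => by
    rw [norm_sub_sq_real, real_inner_smul_left, norm_smul, hu, mul_one, Real.norm_eq_abs, sq_abs]
    ring
  set s := √(‖v‖ ^ 2 - δ ^ 2)
  have hs : s ^ 2 = ‖v‖ ^ 2 - δ ^ 2 := sq_sqrt (by nlinarith)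
  constructor
  · rintro ⟨t, ht, hdist⟩
    have ht : 0 < t := ht.lt_of_ne <| by
      rintro rfl
      rw [zero_smul, zero_sub, norm_neg] at hdist
      linarith
    -- the hypothesis reads `t² + s² ≤ 2t⟪u, v⟫`, and `2ts ≤ t² + s²`
    have := norm_sq t
    nlinarith [sq_nonneg (t - s), norm_nonneg (t • u - v)]
  · intro h
    refine ⟨⟪u, v⟫, (sqrt_nonneg _).trans h, ?_⟩
    have := norm_sq ⟪u, v⟫
    nlinarith [norm_nonneg (⟪u, v⟫ • u - v), sqrt_nonneg (‖v‖ ^ 2 - δ ^ 2)]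

theorem sqrt_sq_sub_sq_eq_mul_cos_arcsin {d : ℝ} (hd : 0 < d) (δ : ℝ) :
    √(d ^ 2 - δ ^ 2) = d * cos (arcsin (δ / d)) := by
  rw [cos_arcsin, ← sqrt_sq hd.le, ← sqrt_mul (sq_nonneg d), sqrt_sq hd.le]
  congr 1
  field_simp

theorem norm_planeDir (θ : ℝ) : ‖planeDir θ‖ = 1 := by
  simp [planeDir, EuclideanSpace.norm_eq, Fin.sum_univ_two]

theorem inner_planeDir_planeDir (θ φ : ℝ) : ⟪planeDir θ, planeDir φ⟫ = cos (θ - φ) := by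
  simp [planeDir, PiLp.inner_apply, Fin.sum_univ_two, cos_sub]
  ring

theorem exists_eq_norm_smul_planeDir (v : EuclideanSpace ℝ (Fin 2)) :
    ∃ φ, v = ‖v‖ • planeDir φ := by
  set w : ℂ := ⟨v 0, v 1⟩
  have hw : ‖w‖ = ‖v‖ := by
    simp [w, Complex.norm_def, Complex.normSq_mk, EuclideanSpace.norm_eq, Fin.sum_univ_two, sq]
  refine ⟨Complex.arg w, ?_⟩
  ext i
  fin_cases i
  · simp [planeDir, ← hw, Complex.norm_mul_cos_arg, w]
  · simp [planeDir, ← hw, Complex.norm_mul_sin_arg, w]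

theorem Function.Periodic.volume_preimage_inter_Ico_eq_Ioc {α : Type*} [MeasurableSpace α]
    {f : ℝ → α} {T : ℝ} (hf : Function.Periodic f T) (hT : 0 < T) (hfm : Measurable f)
    {s : Set α} (hs : MeasurableSet s) (a b : ℝ) :
    volume (f ⁻¹' s ∩ Ico a (a + T)) = volume (f ⁻¹' s ∩ Ioc b (b + T)) := by
  rw [measure_congr ((Filter.EventuallyEq.refl _ (f ⁻¹' s)).inter Ico_ae_eq_Ioc)]
  refine (isAddFundamentalDomain_Ioc hT a).measure_set_eq (isAddFundamentalDomain_Ioc hT b)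
    (hfm hs) ?_
  rintro ⟨_, k, rfl⟩
  ext θ
  simp [vadd_eq_add, add_comm _ θ, hf.int_mul k θ]

theorem cos_le_cos_iff_abs_le {a x : ℝ} (ha₀ : 0 ≤ a) (ha : a ≤ π) (hx : |x| ≤ π) :
    cos a ≤ cos x ↔ |x| ≤ a := by
  rw [← cos_abs x]
  exact strictAntiOn_cos.le_iff_ge ⟨ha₀, ha⟩ ⟨abs_nonneg x, hx⟩

theorem preimage_cos_sub_Ici_inter_Ioc {a : ℝ} (ha₀ : 0 ≤ a) (ha : a < π) (φ : ℝ) :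
    (fun θ => cos (θ - φ)) ⁻¹' Ici (cos a) ∩ Ioc (φ - π) (φ - π + 2 * π) =
      Icc (φ - a) (φ + a) := by
  ext θ
  simp only [mem_inter_iff, mem_preimage, mem_Ici, mem_Ioc, mem_Icc]
  constructor
  · rintro ⟨hcos, hθ₁, hθ₂⟩
    have := (cos_le_cos_iff_abs_le ha₀ ha.le (abs_le.2 ⟨by linarith, by linarith⟩)).1 hcos
    constructor <;> linarith [abs_le.1 this]
  · rintro ⟨hθ₁, hθ₂⟩
    refine ⟨(cos_le_cos_iff_abs_le ha₀ ha.le ?_).2 ?_, by linarith, by linarith⟩ <;>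
      exact abs_le.2 ⟨by linarith, by linarith⟩

theorem measure_directions_hitting_ball_eq_general (q z : EuclideanSpace ℝ (Fin 2))
    (δ : ℝ) (hδ : 0 < δ) (hδd : δ < dist q z) :
    volume {θ ∈ Set.Ico 0 (2 * Real.pi) |
        ∃ t : ℝ, 0 ≤ t ∧ q + t • planeDir θ ∈ Metric.closedBall z δ} =
      ENNReal.ofReal (2 * Real.arcsin (δ / dist q z)) := by
  set d := dist q z
  have hd : 0 < d := hδ.trans hδd
  have hv : ‖z - q‖ = d := (dist_eq_norm' q z).symm
  obtain ⟨φ, hφ⟩ := exists_eq_norm_smul_planeDir (z - q)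
  rw [hv] at hφ
  set a := arcsin (δ / d)
  have hits : ∀ θ, (∃ t : ℝ, 0 ≤ t ∧ q + t • planeDir θ ∈ Metric.closedBall z δ) ↔
      cos a ≤ cos (θ - φ) := fun θ => by
    simp only [Metric.mem_closedBall, dist_eq_norm, show ∀ t : ℝ,
      q + t • planeDir θ - z = t • planeDir θ - (z - q) from fun t => by abel]
    rw [exists_nonneg_norm_smul_sub_le_iff (norm_planeDir θ) hδ.le (hv ▸ hδd), hv, hφ,
      inner_smul_right, inner_planeDir_planeDir, sqrt_sq_sub_sq_eq_mul_cos_arcsin hd,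
      mul_le_mul_iff_right₀ hd]
  have hset : {θ ∈ Ico 0 (2 * π) | ∃ t : ℝ, 0 ≤ t ∧ q + t • planeDir θ ∈ Metric.closedBall z δ} =
      (fun θ => cos (θ - φ)) ⁻¹' Ici (cos a) ∩ Ico 0 (0 + 2 * π) := by
    ext θ
    simp only [hits, zero_add, mem_ofPred_eq, mem_inter_iff, mem_preimage, mem_Ici, and_comm]
  have ha₀ : 0 ≤ a := arcsin_nonneg.2 (div_nonneg hδ.le hd.le)
  have ha : a < π := (arcsin_le_pi_div_two _).trans_lt (by linarith [pi_pos])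
  rw [hset, (cos_periodic.sub_const φ).volume_preimage_inter_Ico_eq_Ioc two_pi_pos
    (by fun_prop) measurableSet_Ici 0 (φ - π), preimage_cos_sub_Ici_inter_Ioc ha₀ ha, volume_Icc]
  ring_nf

/-- The set of directions `θ ∈ [0, 2π)` whose ray from `q` meets the closed `δ`-ball
around `z` (with `0 < δ < d = dist q z`) has Lebesgue measure exactly `2·arcsin(δ/d)`. -/
theorem measure_directions_hitting_ball_eq (q z : EuclideanSpace ℝ (Fin 2)) (hqz : q ≠ z)
    (δ : ℝ) (hδ : 0 < δ) (hδd : δ < dist q z) :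
    volume {θ ∈ Set.Ico 0 (2 * Real.pi) |
        ∃ t : ℝ, 0 ≤ t ∧ q + t • planeDir θ ∈ Metric.closedBall z δ} =
      ENNReal.ofReal (2 * Real.arcsin (δ / dist q z)) :=
  measure_directions_hitting_ball_eq_general q z δ hδ hδd
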